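/- Let n ≥ 3, k ∈ [n] ∖ {1, n−1, n}, and let F be n-completely mixable with mean 0 and finite positive variance. A random vector with all marginals F minimizes max_{K⊆[n], |K|=k} E[(∑_{i∈K} X_i)²] if and only if it is an NCD joint mix with correlation matrix P_n*. -/

import Mathlib

/-!
Let `m i j = E[X_i X_j]` be the Gram matrix of a coupling; its diagonal is `σ² = Var F`, and
`E[(∑_{i∈K} X_i)²]` is the block sum of `m` over `K`. Averaging the block sums over all
permutations of a fixed `k`-set gives `k(n-k)/(n-1)·σ² + k(k-1)/(n(n-1))·E[(∑ X_i)²]`, so the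
maximum over `k`-sets is at least `k(n-k)/(n-1)·σ²`. Couplings whose off-diagonal Gram entries
all equal `-σ²/(n-1)` attain this bound, and one exists: permute the coordinates of a joint mix
by an independent uniform random permutation.

At a minimizer every inequality is tight: `E[(∑ X_i)²] = 0`, so `X` is a joint mix and the rows
of `m` sum to zero, and all `k`-block sums coincide. Comparing the `k`-sets `M ∪ {x, y}` for a
`(k-2)`-set `M` avoiding four indices (possible as `k ≤ n - 2`) gives
`m i p + m j r = m j p + m i r`, which together with the zero row sums forces every off-diagonal
entry to be `-σ²/(n-1)`.
-/

open MeasureTheory ProbabilityTheory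

noncomputable def cov {Ω : Type*} [MeasurableSpace Ω] (P : Measure Ω) (X Y : Ω → ℝ) : ℝ :=
  ∫ ω, (X ω - ∫ x, X x ∂P) * (Y ω - ∫ x, Y x ∂P) ∂P

open Finset Equiv
open scoped Nat ENNReal

namespace JointMix

section BlockSum

variable {ι : Type*} [DecidableEq ι]

def blockSum (m : ι → ι → ℝ) (K : Finset ι) : ℝ := ∑ i ∈ K, ∑ j ∈ K, m i j

theorem blockSum_insert {m : ι → ι → ℝ} (hm : ∀ i j, m i j = m j i) {K : Finset ι} {a : ι}
    (ha : a ∉ K) : blockSum m (insert a K) = blockSum m K + 2 * ∑ j ∈ K, m a j + m a a := by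
  simp only [blockSum, sum_insert ha, sum_add_distrib]
  rw [sum_congr rfl fun j _ => hm j a]
  ring

theorem blockSum_of_offDiag_eq {m : ι → ι → ℝ} {v w : ℝ} (hdiag : ∀ i, m i i = v)
    (hoff : ∀ i j, i ≠ j → m i j = w) (K : Finset ι) :
    blockSum m K = #K * v + #K * (#K - 1) * w := by
  have hrow : ∀ i ∈ K, ∑ j ∈ K, m i j = v + (#K - 1) * w := fun i hi => by
    rw [← add_sum_erase K _ hi, hdiag, sum_congr rfl fun j hj => hoff i j (ne_of_mem_erase hj).symm,
      sum_const, card_erase_of_mem hi, nsmul_eq_mul, Nat.cast_pred (card_pos.mpr ⟨i, hi⟩)]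
  rw [blockSum, sum_congr rfl hrow, sum_const, nsmul_eq_mul]
  ring

variable [Fintype ι]

theorem sum_perm_apply_eq {M : Type*} [AddCommMonoid M] (f : ι → ι → M) {a b i j : ι}
    (hab : a ≠ b) (hij : i ≠ j) :
    ∑ σ : Perm ι, f (σ a) (σ b) = ∑ σ : Perm ι, f (σ i) (σ j) := by
  obtain ⟨τ, hτi, hτj⟩ :=
    MulAction.is_two_pretransitive_iff.mp (Perm.isMultiplyPretransitive ι 2) hij hab
  refine Fintype.sum_equiv (Equiv.mulRight τ) _ _ fun σ => ?_
  simp only [Perm.smul_def] at hτi hτj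
  simp [Perm.mul_apply, hτi, hτj]

theorem card_mul_sum_perm_apply (m : ι → ι → ℝ) {a b : ι} (hab : a ≠ b) :
    (Fintype.card ι * (Fintype.card ι - 1) : ℝ) * ∑ σ : Perm ι, m (σ a) (σ b)
      = (Fintype.card ι)! * (∑ i, ∑ j, m i j - ∑ i, m i i) := by
  have hperm : ∀ σ : Perm ι, ∑ i, ∑ j, m (σ i) (σ j) = ∑ i, ∑ j, m i j := fun σ => by
    rw [Equiv.sum_comp σ fun i => ∑ j, m i (σ j)]
    exact sum_congr rfl fun i _ => Equiv.sum_comp σ (m i)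
  have htotal : ∑ i, ∑ j, ∑ σ : Perm ι, m (σ i) (σ j) = (Fintype.card ι)! * ∑ i, ∑ j, m i j := by
    calc ∑ i, ∑ j, ∑ σ : Perm ι, m (σ i) (σ j) = ∑ i, ∑ σ : Perm ι, ∑ j, m (σ i) (σ j) :=
          sum_congr rfl fun i _ => sum_comm
      _ = ∑ σ : Perm ι, ∑ i, ∑ j, m (σ i) (σ j) := sum_comm
      _ = _ := by simp only [hperm, sum_const, card_univ, Fintype.card_perm, nsmul_eq_mul]
  have hdiag : ∑ i, ∑ σ : Perm ι, m (σ i) (σ i) = (Fintype.card ι)! * ∑ i, m i i := by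
    rw [sum_comm]
    simp only [fun σ : Perm ι => Equiv.sum_comp σ fun i => m i i, sum_const, card_univ,
      Fintype.card_perm, nsmul_eq_mul]
  have hoff : ∀ i, ∑ j ∈ univ.erase i, ∑ σ : Perm ι, m (σ i) (σ j)
      = (Fintype.card ι - 1 : ℝ) * ∑ σ : Perm ι, m (σ a) (σ b) := fun i => by
    rw [sum_congr rfl fun j hj => sum_perm_apply_eq m (ne_of_mem_erase hj).symm hab, sum_const,
      card_erase_of_mem (mem_univ i), card_univ, nsmul_eq_mul,
      Nat.cast_pred (Fintype.card_pos_iff.mpr ⟨i⟩)]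
  have hsplit : ∀ i, ∑ j, ∑ σ : Perm ι, m (σ i) (σ j)
      = ∑ σ : Perm ι, m (σ i) (σ i) + ∑ j ∈ univ.erase i, ∑ σ : Perm ι, m (σ i) (σ j) :=
    fun i => (add_sum_erase univ _ (mem_univ i)).symm
  simp only [hsplit, sum_add_distrib, hdiag, hoff, sum_const, card_univ, nsmul_eq_mul] at htotal
  linear_combination htotal

theorem sum_perm_blockSum_map (m : ι → ι → ℝ) (K : Finset ι) :
    ∑ σ : Perm ι, blockSum m (K.map σ.toEmbedding)
      = blockSum (fun a b => ∑ σ : Perm ι, m (σ a) (σ b)) K := by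
  simp only [blockSum, sum_map, Equiv.coe_toEmbedding]
  rw [sum_comm]
  exact sum_congr rfl fun a _ => sum_comm

theorem sum_perm_blockSum_map_eq {m : ι → ι → ℝ} {v : ℝ} (hdiag : ∀ i, m i i = v)
    (hι : 1 < Fintype.card ι) (K : Finset ι) :
    ∑ σ : Perm ι, blockSum m (K.map σ.toEmbedding)
      = (Fintype.card ι)! * (#K * (Fintype.card ι - #K) / (Fintype.card ι - 1) * v
          + #K * (#K - 1) / (Fintype.card ι * (Fintype.card ι - 1)) * ∑ i, ∑ j, m i j) := by
  obtain ⟨a, b, hab⟩ := Fintype.exists_pair_of_one_lt_card hι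
  have hn : (Fintype.card ι : ℝ) - 1 ≠ 0 := by
    have : (1 : ℝ) < Fintype.card ι := by exact_mod_cast hι
    linarith
  have hpair := card_mul_sum_perm_apply m hab
  rw [sum_perm_blockSum_map, blockSum_of_offDiag_eq (v := (Fintype.card ι)! * v)
    (fun i => by simp [hdiag, Fintype.card_perm]) fun i j hij => sum_perm_apply_eq m hij hab]
  simp only [hdiag, sum_const, card_univ, nsmul_eq_mul] at hpair
  field_simp
  linear_combination (#K : ℝ) * (#K - 1) * hpair

theorem exists_blockSum_ge {m : ι → ι → ℝ} {v : ℝ} (hdiag : ∀ i, m i i = v)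
    (hpsd : 0 ≤ ∑ i, ∑ j, m i j) (hι : 1 < Fintype.card ι) {k : ℕ} (hk : k ≤ Fintype.card ι) :
    ∃ K : Finset ι, #K = k ∧
      k * (Fintype.card ι - k) / (Fintype.card ι - 1) * v ≤ blockSum m K := by
  obtain ⟨K₀, -, hK₀⟩ := exists_subset_card_eq (s := univ) (n := k) (by simpa using hk)
  have hk₀ : (0 : ℝ) ≤ k * (k - 1) := by
    rcases k with _ | k
    · simp
    · push_cast; nlinarith
  have hsum : ∑ _σ : Perm ι, k * (Fintype.card ι - k) / (Fintype.card ι - 1) * v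
      ≤ ∑ σ : Perm ι, blockSum m (K₀.map σ.toEmbedding) := by
    rw [sum_perm_blockSum_map_eq hdiag hι, hK₀, sum_const, card_univ, Fintype.card_perm,
      nsmul_eq_mul]
    have hn : (1 : ℝ) < Fintype.card ι := by exact_mod_cast hι
    gcongr
    exact le_add_of_nonneg_right
      (mul_nonneg (div_nonneg hk₀ (mul_nonneg (Nat.cast_nonneg _) (by linarith))) hpsd)
  obtain ⟨σ, -, hσ⟩ := exists_le_of_sum_le univ_nonempty hsum
  exact ⟨K₀.map σ.toEmbedding, by rw [card_map, hK₀], hσ⟩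

theorem blockSum_eq_of_forall_blockSum_le {m : ι → ι → ℝ} {v : ℝ} (hdiag : ∀ i, m i i = v)
    (hpsd : 0 ≤ ∑ i, ∑ j, m i j) {k : ℕ} (hk : 2 ≤ k) (hkn : k ≤ Fintype.card ι)
    (hle : ∀ K : Finset ι, #K = k →
      blockSum m K ≤ k * (Fintype.card ι - k) / (Fintype.card ι - 1) * v) :
    ∑ i, ∑ j, m i j = 0 ∧ ∀ K : Finset ι, #K = k →
      blockSum m K = k * (Fintype.card ι - k) / (Fintype.card ι - 1) * v := by
  obtain ⟨K₀, -, hK₀⟩ := exists_subset_card_eq (s := univ) (n := k) (by simpa using hkn)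
  have hle₀ : ∀ σ ∈ (univ : Finset (Perm ι)), blockSum m (K₀.map σ.toEmbedding)
      ≤ k * (Fintype.card ι - k) / (Fintype.card ι - 1) * v :=
    fun σ _ => hle _ (by rw [card_map, hK₀])
  have hsum := sum_perm_blockSum_map_eq hdiag (by omega) K₀
  rw [hK₀] at hsum
  have hub : ∑ σ : Perm ι, blockSum m (K₀.map σ.toEmbedding)
      ≤ (Fintype.card ι)! * (k * (Fintype.card ι - k) / (Fintype.card ι - 1) * v) := by
    simpa [Fintype.card_perm] using sum_le_sum hle₀
  have hT : ∑ i, ∑ j, m i j = 0 := by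
    have hk' : (2 : ℝ) ≤ k := by exact_mod_cast hk
    have hn' : (2 : ℝ) ≤ Fintype.card ι := by exact_mod_cast hk.trans hkn
    have hc : 0 < (Fintype.card ι)! *
        ((k : ℝ) * (k - 1) / (Fintype.card ι * (Fintype.card ι - 1))) :=
      mul_pos (by positivity) (div_pos (by nlinarith) (by nlinarith))
    refine le_antisymm ?_ hpsd
    nlinarith
  refine ⟨hT, fun K hK => ?_⟩
  have hall := (sum_eq_sum_iff_of_le hle₀).mp (by
    rw [hsum, hT, sum_const, card_univ, Fintype.card_perm, nsmul_eq_mul]; ring)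
  obtain ⟨σ, rfl⟩ := Perm.exists_map_finset_eq K₀ K (by rw [hK₀, hK])
  exact hall σ (mem_univ σ)

theorem add_eq_add_of_blockSum_eq {m : ι → ι → ℝ} (hm : ∀ i j, m i j = m j i) {k : ℕ} {c : ℝ}
    (hk : 2 ≤ k) (hkn : k + 2 ≤ Fintype.card ι) (hc : ∀ K : Finset ι, #K = k → blockSum m K = c)
    {i j p r : ι} (hip : i ≠ p) (hir : i ≠ r) (hjp : j ≠ p) (hjr : j ≠ r) :
    m i p + m j r = m j p + m i r := by
  obtain ⟨M, hM, hMk⟩ := exists_subset_card_eq (s := univ \ {i, j, p, r}) (n := k - 2) (by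
    have := le_card_sdiff {i, j, p, r} (univ : Finset ι)
    have := card_le_four (a := i) (b := j) (c := p) (d := r)
    rw [card_univ] at *
    omega)
  have hout : ∀ x ∈ ({i, j, p, r} : Finset ι), x ∉ M := fun x hx hxM =>
    (mem_sdiff.mp (hM hxM)).2 hx
  have hpair : ∀ x ∈ ({i, j, p, r} : Finset ι), ∀ y ∈ ({i, j, p, r} : Finset ι), x ≠ y →
      c = blockSum m M + 2 * ∑ l ∈ M, m y l + m y y + 2 * (m x y + ∑ l ∈ M, m x l) + m x x := by
    intro x hx y hy hxy
    have hx' : x ∉ insert y M := by simp [hxy, hout x hx]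
    rw [← hc (insert x (insert y M)) (by rw [card_insert_of_notMem hx',
      card_insert_of_notMem (hout y hy), hMk]; omega), blockSum_insert hm hx',
      blockSum_insert hm (hout y hy), sum_insert (hout y hy)]
  linarith [hpair i (by simp) p (by simp) hip, hpair j (by simp) r (by simp) hjr,
    hpair j (by simp) p (by simp) hjp, hpair i (by simp) r (by simp) hir]

theorem offDiag_eq_of_blockSum_eq {m : ι → ι → ℝ} (hm : ∀ i j, m i j = m j i) {v : ℝ}
    (hdiag : ∀ i, m i i = v) (hrow : ∀ i, ∑ j, m i j = 0) {k : ℕ} {c : ℝ} (hk : 2 ≤ k)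
    (hkn : k + 2 ≤ Fintype.card ι) (hc : ∀ K : Finset ι, #K = k → blockSum m K = c)
    {i j : ι} (hij : i ≠ j) : m i j = -v / (Fintype.card ι - 1) := by
  have hn : (3 : ℝ) ≤ Fintype.card ι := by exact_mod_cast (show 3 ≤ Fintype.card ι by omega)
  have hcol : ∀ a b p, a ≠ b → p ≠ a → p ≠ b → m a p = m b p := by
    intro a b p hab hpa hpb
    have hconst : ∀ r ∈ univ \ {a, b}, m a r - m b r = m a p - m b p := by
      intro r hr
      obtain ⟨hra, hrb⟩ : r ≠ a ∧ r ≠ b := by simpa [not_or] using hr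
      linarith [add_eq_add_of_blockSum_eq hm hk hkn hc hpa.symm hra.symm hpb.symm hrb.symm]
    -- summed over `r ∉ {a, b}`, the zero row sums leave `(n - 2) (m a p - m b p) = 0`
    have hsplit := sum_sdiff (f := fun r => m a r - m b r) (subset_univ {a, b})
    have htot : ∑ r, (m a r - m b r) = 0 := by rw [sum_sub_distrib, hrow, hrow, sub_self]
    rw [htot, sum_congr rfl hconst, sum_pair hab, hdiag, hdiag, hm b a, sum_const,
      card_sdiff_of_subset (subset_univ _), card_pair hab, card_univ, nsmul_eq_mul,
      Nat.cast_sub (by omega)] at hsplit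
    have : ((Fintype.card ι : ℝ) - 2) * (m a p - m b p) = 0 := by push_cast at hsplit; linarith
    linarith [(mul_eq_zero.mp this).resolve_left (by linarith)]
  have hrowi : ∀ l ∈ univ.erase i, m i l = m i j := by
    intro l hl
    rcases eq_or_ne l j with rfl | hlj
    · rfl
    · rw [hm i l, hcol l j i hlj (ne_of_mem_erase hl).symm hij, hm]
  have hrow' := hrow i
  rw [← add_sum_erase univ _ (mem_univ i), hdiag, sum_congr rfl hrowi, sum_const,
    card_erase_of_mem (mem_univ i), card_univ, nsmul_eq_mul, Nat.cast_pred (by omega)] at hrow'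
  rw [eq_div_iff (by linarith)]
  linarith

end BlockSum

section Gram

variable {Ω : Type*} [MeasurableSpace Ω] {P : Measure Ω} {ι : Type*} {X : ι → Ω → ℝ}

noncomputable def gram (P : Measure Ω) (X : ι → Ω → ℝ) (i j : ι) : ℝ := ∫ ω, X i ω * X j ω ∂P

theorem gram_comm (P : Measure Ω) (X : ι → Ω → ℝ) (i j : ι) : gram P X i j = gram P X j i := by
  simp only [gram, mul_comm]

theorem integral_sum_sq_eq_blockSum (hX : ∀ i, MemLp (X i) 2 P) (K : Finset ι) :
    ∫ ω, (∑ i ∈ K, X i ω) ^ 2 ∂P = blockSum (gram P X) K := by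
  have hint : ∀ i j, Integrable (fun ω => X i ω * X j ω) P := fun i j => (hX i).integrable_mul (hX j)
  simp_rw [sq, sum_mul_sum]
  rw [integral_finsetSum _ fun i _ => integrable_finsetSum _ fun j _ => hint i j]
  exact sum_congr rfl fun i _ => integral_finsetSum _ fun j _ => hint i j

variable [Fintype ι]

theorem sum_sum_gram_nonneg (hX : ∀ i, MemLp (X i) 2 P) : 0 ≤ ∑ i, ∑ j, gram P X i j := by
  rw [← blockSum, ← integral_sum_sq_eq_blockSum hX]
  exact integral_nonneg fun ω => sq_nonneg _

theorem ae_sum_eq_zero_iff (hX : ∀ i, MemLp (X i) 2 P) :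
    (∀ᵐ ω ∂P, ∑ i, X i ω = 0) ↔ ∑ i, ∑ j, gram P X i j = 0 := by
  rw [← blockSum, ← integral_sum_sq_eq_blockSum hX, integral_eq_zero_iff_of_nonneg
    (fun ω => sq_nonneg _) (memLp_finsetSum univ fun i _ => hX i).integrable_sq]
  simp [Filter.EventuallyEq]

theorem sum_gram_eq_zero (hX : ∀ i, MemLp (X i) 2 P) (h : ∀ᵐ ω ∂P, ∑ j, X j ω = 0) (i : ι) :
    ∑ j, gram P X i j = 0 := by
  simp only [gram]
  rw [← integral_finsetSum (f := fun j ω => X i ω * X j ω) _ fun j _ =>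
    (hX i).integrable_mul (hX j)]
  simp_rw [← mul_sum]
  exact integral_eq_zero_of_ae (h.mono fun ω hω => by simp [hω])

theorem ae_sum_eq_zero_of_ae_sum_eq_const [IsProbabilityMeasure P]
    (hX : ∀ i, Integrable (X i) P) (hmean : ∀ i, ∫ ω, X i ω ∂P = 0) {c : ℝ}
    (h : ∀ᵐ ω ∂P, ∑ i, X i ω = c) : ∀ᵐ ω ∂P, ∑ i, X i ω = 0 := by
  have hc : c = 0 :=
    calc c = ∫ _, c ∂P := by simp
      _ = ∑ i, ∫ ω, X i ω ∂P := by
        rw [← integral_congr_ae h, integral_finsetSum _ fun i _ => hX i]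
      _ = 0 := by simp [hmean]
  exact hc ▸ h

end Gram

section Marginal

variable {Ω : Type*} [MeasurableSpace Ω] {P : Measure Ω} {F : Measure ℝ} {W : Ω → ℝ}

theorem memLp_two_of_map_eq (hF2 : MemLp id 2 F) (hW : Measurable W) (hWF : P.map W = F) :
    MemLp W 2 P := by
  rw [← hWF] at hF2
  exact (memLp_map_measure_iff aestronglyMeasurable_id hW.aemeasurable).mp hF2

theorem integral_of_map_eq (hW : Measurable W) (hWF : P.map W = F) :
    ∫ ω, W ω ∂P = ∫ x, x ∂F := by
  rw [← hWF, integral_map (f := fun x : ℝ => x) hW.aemeasurable aestronglyMeasurable_id]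

theorem gram_self_of_map_eq {ι : Type*} {X : ι → Ω → ℝ} {i : ι} (hX : Measurable (X i))
    (hXF : P.map (X i) = F) (hmean : ∫ x, x ∂F = 0) : gram P X i i = variance id F := by
  rw [variance_eq_integral measurable_id.aemeasurable]
  simp only [id, hmean, sub_zero, sq]
  rw [gram, ← hXF, integral_map hX.aemeasurable (by fun_prop)]

theorem cov_eq_gram {ι : Type*} {X : ι → Ω → ℝ} {i j : ι} (hi : ∫ ω, X i ω ∂P = 0)
    (hj : ∫ ω, X j ω ∂P = 0) : cov P (X i) (X j) = gram P X i j := by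
  simp [cov, gram, hi, hj]

end Marginal

section Mixture

variable {G Ω : Type*} [MeasurableSpace G] [MeasurableSpace Ω] [Fintype G] {P : Measure Ω}

noncomputable def uniformProd (P : Measure Ω) : Measure (G × Ω) :=
  (Fintype.card G : ℝ≥0∞)⁻¹ • ∑ g, P.map (Prod.mk g)

theorem map_uniformProd {β : Type*} [MeasurableSpace β] {f : G × Ω → β} (hf : Measurable f) :
    (uniformProd P).map f = (Fintype.card G : ℝ≥0∞)⁻¹ • ∑ g, P.map fun ω => f (g, ω) := by
  rw [uniformProd, Measure.map_smul, Measure.map_finset_sum hf.aemeasurable]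
  simp_rw [Measure.map_map hf measurable_prodMk_left]
  rfl

variable [MeasurableSingletonClass G]

instance isProbabilityMeasure_uniformProd [Nonempty G] [IsProbabilityMeasure P] :
    IsProbabilityMeasure (uniformProd P : Measure (G × Ω)) := by
  constructor
  simp [uniformProd, Measure.finsetSum_apply, (measurableEmbedding_prodMk_left _).map_apply,
    ENNReal.inv_mul_cancel]

theorem integral_uniformProd (f : G × Ω → ℝ) (hf : ∀ g, Integrable (fun ω => f (g, ω)) P) :
    ∫ p, f p ∂(uniformProd P) = (Fintype.card G : ℝ)⁻¹ * ∑ g, ∫ ω, f (g, ω) ∂P := by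
  rw [uniformProd, integral_smul_measure, integral_finsetSum_measure fun g _ =>
    ((measurableEmbedding_prodMk_left g).integrable_map_iff).mpr (hf g)]
  simp [(measurableEmbedding_prodMk_left _).integral_map]

end Mixture

section RandomPermutation

variable {Ω : Type*} [MeasurableSpace Ω] {P : Measure Ω} {F : Measure ℝ}
  {ι : Type*} [Fintype ι] [MeasurableSpace (Perm ι)]
  [MeasurableSingletonClass (Perm ι)] {Z : ι → Ω → ℝ}

def permuteCoords (Z : ι → Ω → ℝ) (i : ι) (p : Perm ι × Ω) : ℝ := Z (p.1 i) p.2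

theorem measurable_permuteCoords (hZ : ∀ i, Measurable (Z i)) (i : ι) :
    Measurable (permuteCoords Z i) :=
  measurable_from_prod_countable_right fun σ => hZ (σ i)

variable [DecidableEq ι]

theorem map_permuteCoords (hZ : ∀ i, Measurable (Z i)) (hZF : ∀ i, P.map (Z i) = F) (i : ι) :
    (uniformProd P).map (permuteCoords Z i) = F := by
  simp only [map_uniformProd (measurable_permuteCoords hZ i), permuteCoords, hZF, sum_const,
    card_univ]
  rw [← Nat.cast_smul_eq_nsmul ℝ≥0∞, smul_smul, ENNReal.inv_mul_cancel (by simp) (by simp),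
    one_smul]

theorem gram_permuteCoords (hZ : ∀ i, MemLp (Z i) 2 P) (i j : ι) :
    gram (uniformProd P) (permuteCoords Z) i j
      = ((Fintype.card ι)! : ℝ)⁻¹ * ∑ σ : Perm ι, gram P Z (σ i) (σ j) := by
  rw [gram, integral_uniformProd _ fun σ => (hZ (σ i)).integrable_mul (hZ (σ j)),
    Fintype.card_perm]
  rfl

theorem gram_permuteCoords_of_ne (hF2 : MemLp id 2 F) (hmean : ∫ x, x ∂F = 0)
    (hZ : ∀ i, Measurable (Z i)) (hZF : ∀ i, P.map (Z i) = F) (hsum : ∀ᵐ ω ∂P, ∑ i, Z i ω = 0)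
    {i j : ι} (hij : i ≠ j) :
    gram (uniformProd P) (permuteCoords Z) i j = -variance id F / (Fintype.card ι - 1) := by
  have hZ2 i := memLp_two_of_map_eq hF2 (hZ i) (hZF i)
  have hpair := card_mul_sum_perm_apply (gram P Z) hij
  rw [(ae_sum_eq_zero_iff hZ2).mp hsum] at hpair
  simp only [fun k => gram_self_of_map_eq (hZ k) (hZF k) hmean, sum_const, card_univ,
    nsmul_eq_mul] at hpair
  have hn : (1 : ℝ) < Fintype.card ι := by exact_mod_cast Fintype.one_lt_card_iff.mpr ⟨i, j, hij⟩
  rw [gram_permuteCoords hZ2, eq_div_iff (by linarith), mul_right_comm, mul_assoc,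
    inv_mul_eq_iff_eq_mul₀ (by positivity)]
  apply mul_left_cancel₀ (show (Fintype.card ι : ℝ) ≠ 0 by linarith)
  linear_combination hpair

end RandomPermutation

section Minimizer

variable {Ω : Type*} [MeasurableSpace Ω] {P : Measure Ω} {F : Measure ℝ}
  {ι : Type*} [Fintype ι] [DecidableEq ι] {X : ι → Ω → ℝ}

theorem sSup_integral_sum_sq_le (hF2 : MemLp id 2 F) (hmean : ∫ x, x ∂F = 0)
    (hX : ∀ i, Measurable (X i)) (hXF : ∀ i, P.map (X i) = F) (hι : 1 < Fintype.card ι)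
    (hoff : ∀ i j, i ≠ j → gram P X i j = -variance id F / (Fintype.card ι - 1))
    {k : ℕ} (hk : k ≤ Fintype.card ι) :
    sSup ((fun K : Finset ι => ∫ ω, (∑ i ∈ K, X i ω) ^ 2 ∂P) '' {K | #K = k})
      ≤ k * (Fintype.card ι - k) / (Fintype.card ι - 1) * variance id F := by
  obtain ⟨K₀, -, hK₀⟩ := exists_subset_card_eq (s := univ) (n := k) (by simpa using hk)
  refine csSup_le ⟨_, K₀, hK₀, rfl⟩ (Set.forall_mem_image.mpr fun K (hK : #K = k) => ?_)
  have hn : (Fintype.card ι : ℝ) - 1 ≠ 0 := by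
    have : (1 : ℝ) < Fintype.card ι := by exact_mod_cast hι
    linarith
  rw [integral_sum_sq_eq_blockSum (fun i => memLp_two_of_map_eq hF2 (hX i) (hXF i)),
    blockSum_of_offDiag_eq (fun i => gram_self_of_map_eq (hX i) (hXF i) hmean) hoff, hK]
  exact le_of_eq (by field_simp; ring)

theorem le_sSup_integral_sum_sq (hF2 : MemLp id 2 F) (hmean : ∫ x, x ∂F = 0)
    (hX : ∀ i, Measurable (X i)) (hXF : ∀ i, P.map (X i) = F) (hι : 1 < Fintype.card ι)
    {k : ℕ} (hk : k ≤ Fintype.card ι) :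
    k * (Fintype.card ι - k) / (Fintype.card ι - 1) * variance id F
      ≤ sSup ((fun K : Finset ι => ∫ ω, (∑ i ∈ K, X i ω) ^ 2 ∂P) '' {K | #K = k}) := by
  have hX2 i := memLp_two_of_map_eq hF2 (hX i) (hXF i)
  obtain ⟨K, hK, hle⟩ := exists_blockSum_ge (fun i => gram_self_of_map_eq (hX i) (hXF i) hmean)
    (sum_sum_gram_nonneg hX2) hι hk
  rw [← integral_sum_sq_eq_blockSum hX2] at hle
  exact hle.trans (le_csSup (Set.toFinite _).bddAbove ⟨K, hK, rfl⟩)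

theorem ae_sum_eq_zero_and_gram_of_sSup_le (hF2 : MemLp id 2 F) (hmean : ∫ x, x ∂F = 0)
    (hX : ∀ i, Measurable (X i)) (hXF : ∀ i, P.map (X i) = F) {k : ℕ} (hk : 2 ≤ k)
    (hkn : k + 2 ≤ Fintype.card ι)
    (hle : sSup ((fun K : Finset ι => ∫ ω, (∑ i ∈ K, X i ω) ^ 2 ∂P) '' {K | #K = k})
      ≤ k * (Fintype.card ι - k) / (Fintype.card ι - 1) * variance id F) :
    (∀ᵐ ω ∂P, ∑ i, X i ω = 0) ∧
      ∀ i j, i ≠ j → gram P X i j = -variance id F / (Fintype.card ι - 1) := by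
  have hX2 i := memLp_two_of_map_eq hF2 (hX i) (hXF i)
  have hdiag i := gram_self_of_map_eq (hX i) (hXF i) hmean
  obtain ⟨htotal, hblock⟩ := blockSum_eq_of_forall_blockSum_le hdiag (sum_sum_gram_nonneg hX2) hk
    (by omega) fun K hK => by
      rw [← integral_sum_sq_eq_blockSum hX2 K]
      exact hle.trans' (le_csSup (Set.toFinite _).bddAbove ⟨K, hK, rfl⟩)
  have hsum := (ae_sum_eq_zero_iff hX2).mpr htotal
  exact ⟨hsum, fun i j hij => offDiag_eq_of_blockSum_eq (gram_comm P X) hdiag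
    (sum_gram_eq_zero hX2 hsum) hk hkn hblock hij⟩

end Minimizer

end JointMix

open JointMix

theorem stmt13_general {n k : ℕ} (hk1 : 1 ≤ k) (hkn : k ≤ n)
    (hknot1 : k ≠ 1) (hknotn1 : k ≠ n - 1) (hknotn : k ≠ n)
    (F : Measure ℝ)
    (hF2 : MemLp id 2 F) (hmean : ∫ x, x ∂F = 0)
    (hCM : ∃ (Ω0 : Type) (_ : MeasurableSpace Ω0) (P0 : Measure Ω0)
        (_ : IsProbabilityMeasure P0) (Z : Fin n → Ω0 → ℝ),
      (∀ i, Measurable (Z i)) ∧ (∀ i, Measure.map (Z i) P0 = F) ∧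
      ∃ c : ℝ, ∀ᵐ ω ∂P0, ∑ i, Z i ω = c)
    {Ω : Type*} [MeasurableSpace Ω] (P : Measure Ω) [IsProbabilityMeasure P]
    (X : Fin n → Ω → ℝ) (hmX : ∀ i, Measurable (X i))
    (hmarg : ∀ i, Measure.map (X i) P = F) :
    (∀ (Ω' : Type) (m' : MeasurableSpace Ω') (Q : Measure Ω'), IsProbabilityMeasure Q →
        ∀ Y : Fin n → Ω' → ℝ, (∀ i, Measurable (Y i)) →
        (∀ i, Measure.map (Y i) Q = F) →
        sSup ((fun K : Finset (Fin n) => ∫ ω, (∑ i ∈ K, X i ω) ^ 2 ∂P) ''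
            {K | K.card = k}) ≤
        sSup ((fun K : Finset (Fin n) => ∫ ω', (∑ i ∈ K, Y i ω') ^ 2 ∂Q) ''
            {K | K.card = k}))
    ↔ ((∃ c : ℝ, ∀ᵐ ω ∂P, ∑ i, X i ω = c) ∧
        ∀ i j, i ≠ j → cov P (X i) (X j) = -(variance id F) / ((n : ℝ) - 1)) := by
  have hk : 2 ≤ k := by omega
  have hn1 : 1 < Fintype.card (Fin n) := by simp only [Fintype.card_fin]; omega
  have hkn' : k ≤ Fintype.card (Fin n) := by simpa using hkn
  have hXmean i := (integral_of_map_eq (hmX i) (hmarg i)).trans hmean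
  simp only [fun i j => cov_eq_gram (hXmean i) (hXmean j)]
  constructor
  · intro hmin
    obtain ⟨Ω₀, _, P₀, _, Z, hZ, hZF, c, hc⟩ := hCM
    let : MeasurableSpace (Perm (Fin n)) := ⊤
    have hZsum : ∀ᵐ ω ∂P₀, ∑ i, Z i ω = 0 := ae_sum_eq_zero_of_ae_sum_eq_const
      (fun i => (memLp_two_of_map_eq hF2 (hZ i) (hZF i)).integrable one_le_two)
      (fun i => (integral_of_map_eq (hZ i) (hZF i)).trans hmean) hc
    have hYle := sSup_integral_sum_sq_le hF2 hmean (measurable_permuteCoords hZ)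
      (map_permuteCoords hZ hZF) hn1
      (fun i j => gram_permuteCoords_of_ne hF2 hmean hZ hZF hZsum) hkn'
    obtain ⟨hsum, hgram⟩ := ae_sum_eq_zero_and_gram_of_sSup_le hF2 hmean hmX hmarg hk
      (by simp only [Fintype.card_fin]; omega)
      ((hmin _ _ _ inferInstance _ (measurable_permuteCoords hZ) (map_permuteCoords hZ hZF)).trans
        hYle)
    exact ⟨⟨0, hsum⟩, by simpa using hgram⟩
  · rintro ⟨-, hgram⟩ Ω' _ Q _ Y hY hYF
    exact (sSup_integral_sum_sq_le hF2 hmean hmX hmarg hn1 (by simpa using hgram) hkn').trans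
      (le_sSup_integral_sum_sq hF2 hmean hY hYF hn1 hkn')

/-- Let `n ≥ 3`, `k ∈ [n] \ {1, n-1, n}`, and `F` be `n`-completely mixable with mean `0`
and finite positive variance. A coupling with marginals `F` minimizes
`max_{K⊆[n], |K|=k} E[(∑_{i∈K} X_i)²]` over all couplings iff it is an NCD joint mix
with correlation matrix `P_n*`. -/
theorem stmt13 {n k : ℕ} (hn : 3 ≤ n) (hk1 : 1 ≤ k) (hkn : k ≤ n)
    (hknot1 : k ≠ 1) (hknotn1 : k ≠ n - 1) (hknotn : k ≠ n)
    (F : Measure ℝ) [IsProbabilityMeasure F]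
    (hF2 : MemLp id 2 F) (hmean : ∫ x, x ∂F = 0) (hvarpos : 0 < variance id F)
    (hCM : ∃ (Ω0 : Type) (_ : MeasurableSpace Ω0) (P0 : Measure Ω0)
        (_ : IsProbabilityMeasure P0) (Z : Fin n → Ω0 → ℝ),
      (∀ i, Measurable (Z i)) ∧ (∀ i, Measure.map (Z i) P0 = F) ∧
      ∃ c : ℝ, ∀ᵐ ω ∂P0, ∑ i, Z i ω = c)
    {Ω : Type*} [MeasurableSpace Ω] (P : Measure Ω) [IsProbabilityMeasure P]
    (X : Fin n → Ω → ℝ) (hmX : ∀ i, Measurable (X i))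
    (hmarg : ∀ i, Measure.map (X i) P = F) :
    (∀ (Ω' : Type) (m' : MeasurableSpace Ω') (Q : Measure Ω'), IsProbabilityMeasure Q →
        ∀ Y : Fin n → Ω' → ℝ, (∀ i, Measurable (Y i)) →
        (∀ i, Measure.map (Y i) Q = F) →
        sSup ((fun K : Finset (Fin n) => ∫ ω, (∑ i ∈ K, X i ω) ^ 2 ∂P) ''
            {K | K.card = k}) ≤
        sSup ((fun K : Finset (Fin n) => ∫ ω', (∑ i ∈ K, Y i ω') ^ 2 ∂Q) ''
            {K | K.card = k}))
    ↔ ((∃ c : ℝ, ∀ᵐ ω ∂P, ∑ i, X i ω = c) ∧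
        ∀ i j, i ≠ j → cov P (X i) (X j) = -(variance id F) / ((n : ℝ) - 1)) :=
  stmt13_general hk1 hkn hknot1 hknotn1 hknotn F hF2 hmean hCM P X hmX hmarg
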